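/- For every even linear grammar G, there exists an IETWGFA M such that L(M)_init-even = L(G). -/

import Mathlib

namespace IETW

/-- An input-erasing two-way general finite automaton (IETWGFA). -/
structure GFA (T : Type) : Type 1 where
  Q : Type
  finQ : Finite Q
  start : Q
  accept : Set Q
  /-- Left rules: `(x, q, p)` represents `x q → p`. -/
  ruleL : Set (List T × Q × Q)
  /-- Right rules: `(q, x, p)` represents `q x → p`. -/
  ruleR : Set (Q × List T × Q)
  finL : ruleL.Finite
  finR : ruleR.Finite

variable {T : Type}

/-- One move, labelled by its direction (`true` = left) and the number of erased symbols. -/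
inductive GFA.Step (M : GFA T) :
    List T × M.Q × List T → Bool × ℕ → List T × M.Q × List T → Prop
  | left {u v x : List T} {q p : M.Q} (h : (x, q, p) ∈ M.ruleL) :
      GFA.Step M (u ++ x, q, v) (true, x.length) (u, p, v)
  | right {u v x : List T} {q p : M.Q} (h : (q, x, p) ∈ M.ruleR) :
      GFA.Step M (u, q, x ++ v) (false, x.length) (u, p, v)

/-- A computation along a list of move labels. -/
inductive GFA.Chain (M : GFA T) :
    List T × M.Q × List T → List (Bool × ℕ) → List T × M.Q × List T → Prop
  | nil (c) : GFA.Chain M c [] c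
  | cons {c c' c'' l ls} (h : GFA.Step M c l c') (h' : GFA.Chain M c' ls c'') :
      GFA.Chain M c (l :: ls) c''

/-- `L(M)`. -/
def GFA.lang (M : GFA T) : Set (List T) :=
  {w | ∃ x y ls f, w = x ++ y ∧ f ∈ M.accept ∧ M.Chain (x, M.start, y) ls ([], f, [])}

/-- The moves strictly alternate between left and right. -/
def Alternating (ls : List (Bool × ℕ)) : Prop :=
  ls.Chain' (fun a b => a.1 ≠ b.1)

/-- An even computation: alternating, of even length, and each odd-indexed move reads
the same number of symbols as the following move. -/
def EvenTrace (ls : List (Bool × ℕ)) : Prop :=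
  ls.length % 2 = 0 ∧ Alternating ls ∧
    ∀ i, 2 * i + 1 < ls.length →
      (ls.getD (2 * i) (true, 0)).2 = (ls.getD (2 * i + 1) (true, 0)).2

/-- An initialized even computation: one move followed by an even computation. -/
def InitEvenTrace (ls : List (Bool × ℕ)) : Prop :=
  ∃ l ls', ls = l :: ls' ∧ EvenTrace ls'

/-- `L(M)_alt`. -/
def GFA.langAlt (M : GFA T) : Set (List T) :=
  {w | ∃ x y ls f, w = x ++ y ∧ f ∈ M.accept ∧ Alternating ls ∧
    M.Chain (x, M.start, y) ls ([], f, [])}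

/-- `L(M)_even`. -/
def GFA.langEven (M : GFA T) : Set (List T) :=
  {w | ∃ x y ls f, w = x ++ y ∧ f ∈ M.accept ∧ EvenTrace ls ∧
    M.Chain (x, M.start, y) ls ([], f, [])}

/-- `L(M)_init-even`. -/
def GFA.langInitEven (M : GFA T) : Set (List T) :=
  {w | ∃ x y ls f, w = x ++ y ∧ f ∈ M.accept ∧ InitEvenTrace ls ∧
    M.Chain (x, M.start, y) ls ([], f, [])}

/-- All rules read at most one symbol (IETWSFA). -/
def GFA.Simple (M : GFA T) : Prop :=
  (∀ r ∈ M.ruleL, r.1.length ≤ 1) ∧ (∀ r ∈ M.ruleR, r.2.1.length ≤ 1)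

/-- No ε-rules: every rule reads at least one symbol. -/
def GFA.EpsFree (M : GFA T) : Prop :=
  (∀ r ∈ M.ruleL, r.1 ≠ ([] : List T)) ∧ (∀ r ∈ M.ruleR, r.2.1 ≠ ([] : List T))

/-- A linear grammar: rules `A → x B y` (encoded `(A, x, some (B, y))`)
or `A → x` (encoded `(A, x, none)`). -/
structure LG (T : Type) : Type 1 where
  N : Type
  finN : Finite N
  start : N
  rules : Set (N × List T × Option (N × List T))
  finR : rules.Finite

/-- One derivation step on sentential forms `u A v`. -/
inductive LG.Der (G : LG T) :
    List T × G.N × List T → List T × G.N × List T → Prop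
  | step {u v x y : List T} {A B : G.N} (h : (A, x, some (B, y)) ∈ G.rules) :
      LG.Der G (u, A, v) (u ++ x, B, y ++ v)

/-- `L(G)`. -/
def LG.lang (G : LG T) : Set (List T) :=
  {w | ∃ u A v x, Relation.ReflTransGen G.Der ([], G.start, []) (u, A, v) ∧
    (A, x, none) ∈ G.rules ∧ w = u ++ x ++ v}

/-- Even linear grammar: `|x| = |y|` in every rule `A → x B y`. -/
def LG.Even (G : LG T) : Prop :=
  ∀ r ∈ G.rules, ∀ B (y : List T), r.2.2 = some (B, y) → r.2.1.length = y.length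

/-! The automaton runs a derivation of `G` backwards. Its first move undoes a terminating rule
`A → x` by erasing `x` at the end of the left part of the input; afterwards every rule
`A → x B y` is undone by a pair of moves, one erasing `x` on the left and one erasing `y` on the
right, which read equally many symbols because `G` is even. The computation accepts when it
reaches the start symbol with the whole input erased. -/

lemma GFA.langInitEven_subset_lang (M : GFA T) : M.langInitEven ⊆ M.lang :=
  fun _ ⟨x, y, ls, f, hw, hf, _, hchain⟩ => ⟨x, y, ls, f, hw, hf, hchain⟩

def pairTrace (ns : List ℕ) : List (Bool × ℕ) :=
  ns.flatMap fun n => [(true, n), (false, n)]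

lemma evenTrace_pairTrace (ns : List ℕ) : EvenTrace (pairTrace ns) := by
  induction ns with
  | nil => exact ⟨rfl, List.isChain_nil, fun i hi => by simp [pairTrace] at hi⟩
  | cons n ns ih =>
    obtain ⟨hlen, halt, hpair⟩ := ih
    have hcons : pairTrace (n :: ns) = (true, n) :: (false, n) :: pairTrace ns := rfl
    rw [hcons]
    refine ⟨by simp only [List.length_cons]; omega, ?_, ?_⟩
    · refine List.isChain_cons_cons.2 ⟨by simp, ?_⟩
      cases ns with
      | nil => exact List.isChain_singleton _
      | cons m ms => exact List.isChain_cons_cons.2 ⟨by simp, halt⟩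
    · rintro (_ | i) hi
      · rfl
      · exact hpair i (by simp only [List.length_cons] at hi; omega)

section Construction

variable (G : LG T)

/-- A state is `none` (the initial state), a nonterminal, or a rule `A → x B y` whose `x` has
just been erased and whose `y` remains to be erased. -/
def LG.GFAState : Type := Option (G.N ⊕ {r // r ∈ G.rules})

def leftRule : {r // r ∈ G.rules} → List T × G.GFAState × G.GFAState
  | ⟨(A, x, none), _⟩ => (x, none, some (.inl A))
  | r@⟨(_, x, some (B, _)), _⟩ => (x, some (.inl B), some (.inr r))

def rightRule : {r // r ∈ G.rules} → Option (G.GFAState × List T × G.GFAState)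
  | ⟨(_, _, none), _⟩ => none
  | r@⟨(A, _, some (_, y)), _⟩ => some (some (.inr r), y, some (.inl A))

def LG.toGFA : GFA T where
  Q := G.GFAState
  finQ := by
    have := G.finN
    have := G.finR.to_subtype
    exact inferInstanceAs (Finite (Option _))
  start := none
  accept := {some (.inl G.start)}
  ruleL := Set.range (leftRule G)
  ruleR := Option.some ⁻¹' Set.range (rightRule G)
  finL := have := G.finR.to_subtype; Set.finite_range _
  finR := have := G.finR.to_subtype
    (Set.finite_range _).preimage (Option.some_injective _).injOn

variable {G}

lemma mem_ruleL_iff {x : List T} {q p : G.GFAState} :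
    (x, q, p) ∈ G.toGFA.ruleL ↔
      (∃ A, (A, x, none) ∈ G.rules ∧ q = none ∧ p = some (.inl A)) ∨
      ∃ A B y, ∃ h : (A, x, some (B, y)) ∈ G.rules,
        q = some (.inl B) ∧ p = some (.inr ⟨_, h⟩) := by
  constructor
  · rintro ⟨⟨⟨A, x', _ | ⟨B, y⟩⟩, hr⟩, he⟩ <;>
      simp only [leftRule, Prod.mk.injEq] at he <;> obtain ⟨rfl, rfl, rfl⟩ := he
    exacts [.inl ⟨A, hr, rfl, rfl⟩, .inr ⟨A, B, y, hr, rfl, rfl⟩]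
  · rintro (⟨A, hr, rfl, rfl⟩ | ⟨A, B, y, hr, rfl, rfl⟩)
    exacts [⟨⟨_, hr⟩, rfl⟩, ⟨⟨_, hr⟩, rfl⟩]

lemma mem_ruleR_iff {y : List T} {q p : G.GFAState} :
    (q, y, p) ∈ G.toGFA.ruleR ↔
      ∃ A x B, ∃ h : (A, x, some (B, y)) ∈ G.rules,
        q = some (.inr ⟨_, h⟩) ∧ p = some (.inl A) := by
  constructor
  · rintro ⟨⟨⟨A, x, _ | ⟨B, y'⟩⟩, hr⟩, he⟩ <;>
      simp only [rightRule, reduceCtorEq, Option.some.injEq] at he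
    obtain ⟨rfl, rfl, rfl⟩ := he
    exact ⟨A, x, B, hr, rfl, rfl⟩
  · rintro ⟨A, x, B, hr, rfl, rfl⟩
    exact ⟨⟨_, hr⟩, rfl⟩

variable (G)

/-- The meaning of a configuration `(u, q, v)` of `G.toGFA`: for a nonterminal `A`, the form
`u A v` is derivable; for a rule `A → x B y`, the right part is `y v₀` with `u A v₀`
derivable. The initial state carries no information. -/
def Derivable : List T × G.GFAState × List T → Prop
  | (_, none, _) => True
  | (u, some (.inl A), v) => Relation.ReflTransGen G.Der ([], G.start, []) (u, A, v)
  | (u, some (.inr r), v) => ∃ B y v₀, r.1.2.2 = some (B, y) ∧ v = y ++ v₀ ∧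
      Relation.ReflTransGen G.Der ([], G.start, []) (u, r.1.1, v₀)

variable {G}

lemma derivable_of_step {c c' : List T × G.toGFA.Q × List T} {l : Bool × ℕ}
    (hs : G.toGFA.Step c l c') (h : Derivable G c') : Derivable G c := by
  cases hs with
  | left hr =>
    obtain ⟨A, -, rfl, -⟩ | ⟨A, B, y, hAB, rfl, rfl⟩ := mem_ruleL_iff.1 hr
    · trivial
    · obtain ⟨B', y', v₀, hBy, rfl, hder⟩ := h
      cases hBy
      exact hder.tail (.step hAB)
  | right hr =>
    obtain ⟨A, x, B, -, rfl, rfl⟩ := mem_ruleR_iff.1 hr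
    exact ⟨B, _, _, rfl, rfl, h⟩

lemma derivable_of_chain {c : List T × G.toGFA.Q × List T} {ls : List (Bool × ℕ)}
    (h : G.toGFA.Chain c ls ([], some (.inl G.start), [])) : Derivable G c := by
  generalize hd : (([], some (.inl G.start), []) : List T × G.toGFA.Q × List T) = d at h
  induction h with
  | nil => subst hd; exact .refl
  | cons hs _ ih => exact derivable_of_step hs (ih hd)

lemma lang_toGFA_subset : G.toGFA.lang ⊆ G.lang := by
  rintro _ ⟨x, y, ls, f, rfl, rfl, hchain⟩
  cases hchain with
  | cons hs hchain =>
    cases hs with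
    | left hr =>
      obtain ⟨A, hA, -, rfl⟩ | ⟨_, _, _, _, h, -⟩ := mem_ruleL_iff.1 hr
      · exact ⟨_, A, y, _, derivable_of_chain hchain, hA, rfl⟩
      · cases h
    | right hr =>
      obtain ⟨_, _, _, _, h, -⟩ := mem_ruleR_iff.1 hr
      cases h

lemma exists_chain_of_derives (hG : G.Even) {c : List T × G.N × List T}
    (h : Relation.ReflTransGen G.Der ([], G.start, []) c) :
    ∃ ns, G.toGFA.Chain (c.1, some (.inl c.2.1), c.2.2) (pairTrace ns)
      ([], some (.inl G.start), []) := by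
  induction h with
  | refl => exact ⟨[], .nil _⟩
  | tail _ hder ih =>
    obtain ⟨ns, hchain⟩ := ih
    obtain @⟨u, v, x, y, A, B, hr⟩ := hder
    have hxy : x.length = y.length := hG _ hr B y rfl
    have hL := GFA.Step.left (u := u) (v := y ++ v)
      (mem_ruleL_iff.2 (.inr ⟨A, B, y, hr, rfl, rfl⟩))
    have hR := GFA.Step.right (u := u) (v := v) (mem_ruleR_iff.2 ⟨A, x, B, hr, rfl, rfl⟩)
    rw [← hxy] at hR
    exact ⟨x.length :: ns, .cons hL (.cons hR hchain)⟩

lemma lang_subset_langInitEven_toGFA (hG : G.Even) : G.lang ⊆ G.toGFA.langInitEven := by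
  rintro _ ⟨u, A, v, x, hder, hA, rfl⟩
  obtain ⟨ns, hchain⟩ := exists_chain_of_derives hG hder
  have hL := GFA.Step.left (u := u) (v := v) (mem_ruleL_iff.2 (.inl ⟨A, hA, rfl, rfl⟩))
  exact ⟨u ++ x, v, _, _, rfl, rfl, ⟨_, _, rfl, evenTrace_pairTrace ns⟩, .cons hL hchain⟩

end Construction

theorem elg_to_initeven_ietwgfa {T : Type} (G : LG T) (hG : G.Even) :
    ∃ M : GFA T, M.langInitEven = G.lang :=
  ⟨G.toGFA, ((GFA.langInitEven_subset_lang _).trans lang_toGFA_subset).antisymm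
    (lang_subset_langInitEven_toGFA hG)⟩

end IETW
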